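/- arXiv:1806.02596 — 2 statements merged into one kernel-verified Lean document; each statement's English description precedes it below -/
import Mathlib

section
/- Let $k \geq 2$ be an integer, $\alpha \geq 1$ a real, and let $c_1, \dots, c_k \geq 0$ be reals with $\sum_j c_j = 1$, $c_a = \max_j c_j$, $c_b = \max_{j \neq a} c_j$ and $c_a = \alpha \cdot c_b$. Then $\sum_j c_j^2 \geq \frac{\alpha^2 + k - 1}{(\alpha + k - 1)^2}$. -/
/-!
Write `m = k - 1` and `x = c a`. The other `m` opinions carry mass `1 - x`, each at most
`c b = x / α`, so `x ≥ α / (α + m)`; by Cauchy–Schwarz they contribute at least `(1 - x)² / m`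
to `∑ c_j²`. The function `x² + (1 - x)² / m` is increasing for `x ≥ 1 / (1 + m)`, which lies
below `α / (α + m)` because `α ≥ 1`, and its value at `α / (α + m)` is the claimed bound.
-/

open Finset

theorem div_sq_le_sq_add_of_le_mul {α m x E : ℝ} (hα : 1 ≤ α) (hm : 0 < m)
    (hx : α ≤ x * (α + m)) (hE : (1 - x) ^ 2 ≤ m * E) :
    (α ^ 2 + m) / (α + m) ^ 2 ≤ x ^ 2 + E := by
  rw [div_le_iff₀ (by positivity)]
  set y := x * (α + m) - α
  have expand : m * ((x ^ 2 + E) * (α + m) ^ 2 - (α ^ 2 + m)) =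
      (m * E - (1 - x) ^ 2) * (α + m) ^ 2 + (m + 1) * y ^ 2 + 2 * m * (α - 1) * y := by
    ring
  have hy : 0 ≤ y := sub_nonneg.mpr hx
  have hrhs : 0 ≤ (m * E - (1 - x) ^ 2) * (α + m) ^ 2 + (m + 1) * y ^ 2
      + 2 * m * (α - 1) * y := by
    have := sub_nonneg.mpr hE
    have := sub_nonneg.mpr hα
    positivity
  linarith [(mul_nonneg_iff_of_pos_left hm).mp (expand ▸ hrhs)]

section Mass

variable {ι : Type*} [Fintype ι] [DecidableEq ι] {c : ι → ℝ} {a : ι}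

theorem sum_erase_eq_one_sub (hsum : ∑ j, c j = 1) : ∑ j ∈ univ.erase a, c j = 1 - c a := by
  rw [← hsum, ← add_sum_erase univ c (mem_univ a)]
  ring

theorem le_mul_add_card_sub_one {b : ι} {α : ℝ} (hα : 0 ≤ α) (hsum : ∑ j, c j = 1)
    (hb : ∀ j, j ≠ a → c j ≤ c b) (hbias : c a = α * c b) :
    α ≤ c a * (α + (Fintype.card ι - 1)) := by
  have hrest : 1 - c a ≤ (Fintype.card ι - 1) * c b := by
    calc 1 - c a = ∑ j ∈ univ.erase a, c j := (sum_erase_eq_one_sub hsum).symm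
      _ ≤ ∑ _j ∈ univ.erase a, c b := sum_le_sum fun j hj ↦ hb j (ne_of_mem_erase hj)
      _ = (Fintype.card ι - 1) * c b := by
        rw [sum_const, nsmul_eq_mul, cast_card_erase_of_mem (mem_univ a), card_univ]
  have hcb : 1 ≤ (α + (Fintype.card ι - 1)) * c b := by linarith
  calc α ≤ α * ((α + (Fintype.card ι - 1)) * c b) := le_mul_of_one_le_right hα hcb
    _ = c a * (α + (Fintype.card ι - 1)) := by rw [hbias]; ring

theorem sq_one_sub_le_card_sub_one_mul_sum_erase (hsum : ∑ j, c j = 1) :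
    (1 - c a) ^ 2 ≤ (Fintype.card ι - 1) * ∑ j ∈ univ.erase a, c j ^ 2 := by
  have h := sq_sum_le_card_mul_sum_sq (s := univ.erase a) (f := c)
  rwa [sum_erase_eq_one_sub hsum, cast_card_erase_of_mem (mem_univ a), card_univ] at h

end Mass

theorem collision_prob_lower_bound_general
    (k : ℕ) (hk : 2 ≤ k) (α : ℝ) (hα : 1 ≤ α)
    (c : Fin k → ℝ) (hsum : ∑ j, c j = 1)
    (a b : Fin k)
    (hb : ∀ j, j ≠ a → c j ≤ c b)
    (hbias : c a = α * c b) :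
    (α ^ 2 + k - 1) / ((α + k - 1) ^ 2) ≤ ∑ j, (c j) ^ 2 := by
  have hm : (0 : ℝ) < k - 1 := by
    have : (2 : ℝ) ≤ k := by exact_mod_cast hk
    linarith
  have hmass := le_mul_add_card_sub_one (by linarith) hsum hb hbias
  have hcs := sq_one_sub_le_card_sub_one_mul_sum_erase (a := a) hsum
  rw [Fintype.card_fin] at hmass hcs
  rw [← add_sum_erase univ _ (mem_univ a), add_sub_assoc, add_sub_assoc]
  exact div_sq_le_sq_add_of_le_mul hα hm hmass hcs

/-- Lower bound on the collision probability `∑ c_j²` in terms of the bias `α`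
between the dominant opinion `a` and second-dominant opinion `b`. -/
theorem collision_prob_lower_bound
    (k : ℕ) (hk : 2 ≤ k) (α : ℝ) (hα : 1 ≤ α)
    (c : Fin k → ℝ) (hc : ∀ j, 0 ≤ c j) (hsum : ∑ j, c j = 1)
    (a b : Fin k) (hab : a ≠ b)
    (ha : ∀ j, c j ≤ c a)
    (hb : ∀ j, j ≠ a → c j ≤ c b)
    (hbias : c a = α * c b) :
    (α ^ 2 + k - 1) / ((α + k - 1) ^ 2) ≤ ∑ j, (c j) ^ 2 :=
  collision_prob_lower_bound_general k hk α hα c hsum a b hb hbias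
end

section
/- Let $(a_i)_{i \geq 0}$ be a sequence in $(1/2, 1)$ satisfying $a_{i+1} \geq \frac{a_i^2}{a_i^2 + (1 - a_i)^2}$ for all $i$, and suppose $a_0 \geq \frac{k}{k+1}$ for some real $k > 1$. Then for all $j \geq 0$, $a_j \geq 1 - \frac{1}{1 + k^{2^j}}$. -/
/-! The map `x ↦ x² / (x² + (1 - x)²)` squares the odds `x / (1 - x)`, and the bound
`1 - 1 / (1 + K) ≤ x` says exactly that the odds of `x` are at least `K`. Hence the odds of `a j`
are at least `k ^ (2 ^ j)`. -/

lemma one_sub_inv_one_add_le_div_add_iff {K p q : ℝ} (hK : 0 ≤ K) (hpq : 0 < p + q) :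
    1 - 1 / (1 + K) ≤ p / (p + q) ↔ K * q ≤ p := by
  have hK1 : 1 - 1 / (1 + K) = K / (1 + K) := by field_simp; ring
  rw [hK1, div_le_div_iff₀ (by linarith) hpq]
  constructor <;> intro h <;> linarith

lemma one_sub_inv_one_add_le_iff {K x : ℝ} (hK : 0 ≤ K) :
    1 - 1 / (1 + K) ≤ x ↔ K * (1 - x) ≤ x := by
  simpa using one_sub_inv_one_add_le_div_add_iff (p := x) (q := 1 - x) hK (by norm_num)

lemma one_sub_inv_one_add_sq_le_sq_div {K x : ℝ} (hK : 0 ≤ K) (hx : x < 1)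
    (h : 1 - 1 / (1 + K) ≤ x) :
    1 - 1 / (1 + K ^ 2) ≤ x ^ 2 / (x ^ 2 + (1 - x) ^ 2) := by
  have hodds : K * (1 - x) ≤ x := (one_sub_inv_one_add_le_iff hK).1 h
  have hden : 0 < x ^ 2 + (1 - x) ^ 2 := by
    have : 0 < (1 - x) ^ 2 := pow_pos (sub_pos.2 hx) 2
    positivity
  rw [one_sub_inv_one_add_le_div_add_iff (sq_nonneg K) hden, ← mul_pow]
  exact pow_le_pow_left₀ (mul_nonneg hK (sub_nonneg.2 hx.le)) hodds 2

/-- Doubly exponential convergence of the dominant fraction towards 1. -/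
theorem dominant_fraction_doubly_exponential
    (k : ℝ) (hk : 1 < k)
    (a : ℕ → ℝ)
    (hmem : ∀ i, a i ∈ Set.Ioo (1 / 2 : ℝ) 1)
    (hrec : ∀ i, (a i) ^ 2 / ((a i) ^ 2 + (1 - a i) ^ 2) ≤ a (i + 1))
    (h0 : k / (k + 1) ≤ a 0) :
    ∀ j, 1 - 1 / (1 + k ^ (2 ^ j)) ≤ a j := by
  have hk0 : 0 ≤ k := by linarith
  intro j
  induction j with
  | zero =>
    have hbase : 1 - 1 / (1 + k) = k / (k + 1) := by field_simp; ring
    rwa [pow_zero, pow_one, hbase]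
  | succ j ih =>
    rw [pow_succ, pow_mul]
    exact (one_sub_inv_one_add_sq_le_sq_div (pow_nonneg hk0 _) (hmem j).2 ih).trans (hrec j)
end
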